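/- (Faithfulness criterion 1) Let G be a directed mixed graph over micro-variables X with distribution P_X of positive density, and let P be a partition of its nodes. Assume: (i) (G, P_X) is σ-Markovian and σ-faithful; (ii) every strongly connected component of G is contained in some group of P; (iii) for every adjacent pair of edges e = (W,Y), e' = (Y,Z) of co(G,P) and every y ∈ bd_e(Y) there exists y' ∈ bd_{e'}(Y) with sc_G(y) = sc_G(y'). Then (co(G,P), P_X) is σ-faithful and co(G,P) is acyclic. -/

import Mathlib

/-! ## Mixed graphs -/

/-- A mixed graph: directed, bidirected and undirected edges, no self-edges. -/
structure MixedGraph (V : Type) where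
  dir : V → V → Prop
  bidir : V → V → Prop
  undir : V → V → Prop
  bidir_symm : ∀ {a b}, bidir a b → bidir b a
  undir_symm : ∀ {a b}, undir a b → undir b a
  dir_irrefl : ∀ a, ¬ dir a a
  bidir_irrefl : ∀ a, ¬ bidir a a
  undir_irrefl : ∀ a, ¬ undir a a

namespace MixedGraph

variable {V I : Type}

/-- A directed mixed graph is a mixed graph without undirected edges. -/
def IsDMG (G : MixedGraph V) : Prop := ∀ a b, ¬ G.undir a b

/-- `a` and `b` lie in the same strongly connected component: there are directed
paths between them in both directions. -/
def Strongly (G : MixedGraph V) (a b : V) : Prop :=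
  Relation.ReflTransGen G.dir a b ∧ Relation.ReflTransGen G.dir b a

lemma Strongly.refl (G : MixedGraph V) (a : V) : G.Strongly a a :=
  ⟨Relation.ReflTransGen.refl, Relation.ReflTransGen.refl⟩

lemma Strongly.symm {G : MixedGraph V} {a b : V} (h : G.Strongly a b) : G.Strongly b a :=
  ⟨h.2, h.1⟩

/-- A graph is acyclic if it has no nontrivial directed closed walk. -/
def Acyclic (G : MixedGraph V) : Prop := ∀ a, ¬ Relation.TransGen G.dir a a

end MixedGraph

/-! ## Walks -/

/-- The four ways in which an edge can occur on a walk, as traversed from its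
first node `a` to its second node `b`: `fw` is `a → b`, `bw` is `a ← b`,
`bi` is `a ↔ b` and `un` is `a − b`. -/
inductive StepKind | fw | bw | bi | un
deriving DecidableEq

/-- A step of a walk: an ordered pair of nodes together with the kind of edge. -/
structure Step (V : Type) where
  a : V
  b : V
  k : StepKind

/-- The step is an actual edge of the graph `G`. -/
def Step.ok {V : Type} (G : MixedGraph V) (s : Step V) : Prop :=
  match s.k with
  | .fw => G.dir s.a s.b
  | .bw => G.dir s.b s.a
  | .bi => G.bidir s.a s.b
  | .un => G.undir s.a s.b

/-- The edge of the step has an arrowhead at its first node. -/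
def Step.headA {V : Type} (s : Step V) : Prop := s.k = .bw ∨ s.k = .bi

/-- The edge of the step has an arrowhead at its second node. -/
def Step.headB {V : Type} (s : Step V) : Prop := s.k = .fw ∨ s.k = .bi

namespace MixedGraph

variable {V I : Type}

/-- `IsWalk G x y L`: the list of steps `L` forms a walk from `x` to `y` in `G`. -/
inductive IsWalk (G : MixedGraph V) : V → V → List (Step V) → Prop
  | nil (a : V) : IsWalk G a a []
  | cons {c : V} (s : Step V) (L : List (Step V)) (hok : s.ok G)
      (hw : IsWalk G s.b c L) : IsWalk G s.a c (s :: L)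

/-- `v` is a collider at junction `i` of the walk `L`: both edges adjacent to the
inner node `v` point into `v`. -/
def ColliderAt (L : List (Step V)) (i : ℕ) (v : V) : Prop :=
  ∃ s t, L[i]? = some s ∧ L[i+1]? = some t ∧ s.b = v ∧ t.a = v ∧ s.headB ∧ t.headA

/-- `v` is a non-collider at junction `i` of the walk `L`. -/
def NonColliderAt (L : List (Step V)) (i : ℕ) (v : V) : Prop :=
  ∃ s t, L[i]? = some s ∧ L[i+1]? = some t ∧ s.b = v ∧ t.a = v ∧ ¬ (s.headB ∧ t.headA)

/-- The walk `L` from `x` to `y` is m-blocked by the node set `S`. -/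
def MBlockedWalk (G : MixedGraph V) (S : Set V) (x y : V) (L : List (Step V)) : Prop :=
  x ∈ S ∨ y ∈ S ∨
  (∃ i v, ColliderAt L i v ∧ ∀ d, Relation.ReflTransGen G.dir v d → d ∉ S) ∨
  (∃ i v, NonColliderAt L i v ∧ v ∈ S)

/-- The walk `L` from `x` to `y` is σ-blocked by the node set `S`. -/
def SigmaBlockedWalk (G : MixedGraph V) (S : Set V) (x y : V) (L : List (Step V)) : Prop :=
  x ∈ S ∨ y ∈ S ∨
  (∃ i v, ColliderAt L i v ∧ ∀ d, Relation.ReflTransGen G.dir v d → d ∉ S) ∨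
  (∃ i s t, L[i]? = some s ∧ L[i+1]? = some t ∧ s.b = t.a ∧ ¬ (s.headB ∧ t.headA) ∧
    s.b ∈ S ∧
    (((s.k = .bw ∨ s.k = .un) ∧ ¬ G.Strongly s.b s.a) ∨
     ((t.k = .fw ∨ t.k = .un) ∧ ¬ G.Strongly t.a t.b)))

/-- `x` and `y` are m-separated by `S` in `G`. -/
def MSep (G : MixedGraph V) (S : Set V) (x y : V) : Prop :=
  ∀ L, G.IsWalk x y L → G.MBlockedWalk S x y L

/-- `x` and `y` are σ-separated by `S` in `G`. -/
def SigmaSep (G : MixedGraph V) (S : Set V) (x y : V) : Prop :=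
  ∀ L, G.IsWalk x y L → G.SigmaBlockedWalk S x y L

/-! ## Acyclification -/

/-- The acyclification of a mixed graph. -/
def acy (G : MixedGraph V) : MixedGraph V where
  dir a b := (∃ c, G.dir a c ∧ G.Strongly c b) ∧ ¬ G.Strongly a b
  bidir a b := a ≠ b ∧ (G.Strongly a b ∨
    ∃ a' b', G.Strongly a a' ∧ G.Strongly b b' ∧ G.bidir a' b')
  undir a b := ¬ G.Strongly a b ∧ G.undir a b
  bidir_symm := by
    rintro a b ⟨hab, h | ⟨a', b', ha, hb, h⟩⟩
    · exact ⟨hab.symm, Or.inl h.symm⟩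
    · exact ⟨hab.symm, Or.inr ⟨b', a', hb, ha, G.bidir_symm h⟩⟩
  undir_symm := by
    rintro a b ⟨h1, h2⟩
    exact ⟨fun h => h1 h.symm, G.undir_symm h2⟩
  dir_irrefl := fun a h => h.2 (Strongly.refl G a)
  bidir_irrefl := fun a h => h.1 rfl
  undir_irrefl := fun a h => h.1 (Strongly.refl G a)

/-! ## Coarse graphs -/

/-- The coarse (quotient) graph of `G` with respect to the partition given by the
quotient map `q` onto the set of groups `I`. -/
def coarse (G : MixedGraph V) (q : V → I) : MixedGraph I where
  dir Y Z := Y ≠ Z ∧ ∃ y z, q y = Y ∧ q z = Z ∧ G.dir y z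
  bidir Y Z := Y ≠ Z ∧ ∃ y z, q y = Y ∧ q z = Z ∧ G.bidir y z
  undir Y Z := Y ≠ Z ∧ ∃ y z, q y = Y ∧ q z = Z ∧ G.undir y z
  bidir_symm := by
    rintro Y Z ⟨hne, y, z, hy, hz, h⟩
    exact ⟨hne.symm, z, y, hz, hy, G.bidir_symm h⟩
  undir_symm := by
    rintro Y Z ⟨hne, y, z, hy, hz, h⟩
    exact ⟨hne.symm, z, y, hz, hy, G.undir_symm h⟩
  dir_irrefl := fun Y h => h.1 rfl
  bidir_irrefl := fun Y h => h.1 rfl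
  undir_irrefl := fun Y h => h.1 rfl

end MixedGraph

open MeasureTheory ProbabilityTheory

/-- The σ-algebra generated by the group `A` of the random variables `X v`. -/
def genOf {Ω V : Type} [MeasurableSpace Ω] (X : V → Ω → ℝ) (A : Set V) :
    MeasurableSpace Ω :=
  ⨆ v ∈ A, MeasurableSpace.comap (X v) inferInstance

/-- Mutual conditional independence of the groups `Y` and `Z` of random variables
given the group `W`. -/
def GroupCI {Ω V : Type} [m : MeasurableSpace Ω] [StandardBorelSpace Ω]
    (μ : Measure Ω) [IsFiniteMeasure μ] (X : V → Ω → ℝ) (Y Z W : Set V) : Prop :=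
  ∃ h : genOf X W ≤ m, ProbabilityTheory.CondIndep (genOf X W) (genOf X Y) (genOf X Z) h μ

/-- The joint distribution of the variables `X v` has a positive density. -/
def HasPositiveDensity {Ω V : Type} [MeasurableSpace Ω] [Fintype V] (μ : Measure Ω)
    (X : V → Ω → ℝ) : Prop :=
  ∃ f : (V → ℝ) → ℝ, Measurable f ∧ (∀ x, 0 < f x) ∧
    Measure.map (fun ω v => X v ω) μ = volume.withDensity fun x => ENNReal.ofReal (f x)

/-- The boundary `bd_e` at the second group `e.b` of a macro edge `e` of the coarse
graph: the micro-nodes in the group `e.b` that are endpoints of a micro-edge of the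
same type (and orientation) as `e` whose other endpoint lies in the group `e.a`. -/
def bdEnd {V I : Type} (G : MixedGraph V) (q : V → I) (e : Step I) : Set V :=
  {y | q y = e.b ∧ ∃ w, q w = e.a ∧ Step.ok G ⟨w, y, e.k⟩}

/-- The boundary `bd_e` at the first group `e.a` of a macro edge `e` of the coarse
graph. -/
def bdStart {V I : Type} (G : MixedGraph V) (q : V → I) (e : Step I) : Set V :=
  {w | q w = e.a ∧ ∃ y, q y = e.b ∧ Step.ok G ⟨w, y, e.k⟩}

/-- A (possibly trivial) directed path from `x` to `y` all of whose nodes lie in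
the set `A`. -/
def DirPathIn {V : Type} (G : MixedGraph V) (A : Set V) (x y : V) : Prop :=
  Relation.ReflTransGen (fun a b => G.dir a b ∧ a ∈ A ∧ b ∈ A) x y

open MeasureTheory ProbabilityTheory MixedGraph

variable {Ω V I : Type}

/-- `(G, μ)` is σ-Markovian: σ-separation implies conditional independence. -/
def SigmaMarkov [m : MeasurableSpace Ω] [StandardBorelSpace Ω] (G : MixedGraph V)
    (μ : Measure Ω) [IsFiniteMeasure μ] (X : V → Ω → ℝ) : Prop :=
  ∀ (a b : V) (S : Set V), G.SigmaSep S a b → GroupCI μ X {a} {b} S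

/-- `(G, μ)` is σ-faithful: conditional independence implies σ-separation. -/
def SigmaFaithful [m : MeasurableSpace Ω] [StandardBorelSpace Ω] (G : MixedGraph V)
    (μ : Measure Ω) [IsFiniteMeasure μ] (X : V → Ω → ℝ) : Prop :=
  ∀ (a b : V) (S : Set V), GroupCI μ X {a} {b} S → G.SigmaSep S a b

/-- `(G, μ)` is m-Markovian: m-separation implies conditional independence. -/
def MMarkov [m : MeasurableSpace Ω] [StandardBorelSpace Ω] (G : MixedGraph V)
    (μ : Measure Ω) [IsFiniteMeasure μ] (X : V → Ω → ℝ) : Prop :=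
  ∀ (a b : V) (S : Set V), G.MSep S a b → GroupCI μ X {a} {b} S

/-- The pair of the coarse graph `G.coarse q` and the distribution is σ-faithful on
the group level: mutual conditional independence of two groups given the union of
the groups in `S` implies their σ-separation by `S` in the coarse graph. -/
def SigmaFaithfulGrp [m : MeasurableSpace Ω] [StandardBorelSpace Ω] (G : MixedGraph V)
    (q : V → I) (μ : Measure Ω) [IsFiniteMeasure μ] (X : V → Ω → ℝ) : Prop :=
  ∀ (Y Z : I) (S : Set I),
    GroupCI μ X (q ⁻¹' {Y}) (q ⁻¹' {Z}) (q ⁻¹' S) → (G.coarse q).SigmaSep S Y Z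

/-!
Condition (iii) lets every micro edge entering a group be continued, inside one strongly
connected component, by a micro edge leaving the group along any prescribed coarse edge.
Chasing a coarse cycle in this way through the finite micro graph must revisit a node, which
produces a micro cycle through two different groups, against (ii).

For faithfulness, a σ-open coarse walk lifts edge by edge to a σ-open micro walk whose
consecutive edges are joined by directed paths inside strongly connected components. At a
coarse non-collider the group avoids `S` (the coarse graph is acyclic), and the connecting path
is oriented so as to create no collider. At a coarse collider the group has a descendant group
in `S`, which lifts to a micro descendant; the connecting path then runs into the collider, and
the non-colliders it creates do not σ-block because their edges stay inside one component.
σ-faithfulness of `G` turns the open micro walk into conditional dependence of its endpoints,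
hence of their groups.
-/

open Relation

theorem Finite.exists_transGen_self {α : Type} [Finite α] {R : α → α → Prop} {P : Set α}
    (hP : P.Nonempty) (h : ∀ a ∈ P, ∃ b ∈ P, R a b) : ∃ a, TransGen R a a := by
  by_contra! hirr
  have : IsTrans α (flip (TransGen R)) := ⟨fun _ _ _ h₁ h₂ => h₂.trans h₁⟩
  have : Std.Irrefl (α := α) (flip (TransGen R)) := ⟨hirr⟩
  obtain ⟨a, ha, hmin⟩ :=
    (Finite.wellFounded_of_trans_of_irrefl (flip (TransGen R))).has_min P hP
  obtain ⟨b, hb, hab⟩ := h a ha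
  exact hmin b hb (.single hab)

theorem List.isChain_cons_append_singleton {α : Type} {R : α → α → Prop} {a b : α}
    {l : List α} (h : ∀ x ∈ a :: l, ∀ y ∈ l ++ [b], R x y) :
    (a :: (l ++ [b])).IsChain R := by
  refine List.Pairwise.isChain (List.pairwise_cons.2 ⟨h a (by simp), ?_⟩)
  refine List.pairwise_append.2 ⟨List.pairwise_of_forall_mem_list fun x hx y hy => ?_,
    List.pairwise_singleton _ _, fun x hx y hy => h x (by simp [hx]) y (by simp_all)⟩
  exact h x (by simp [hx]) y (by simp [hy])

lemma Step.not_headA_iff {s : Step V} : ¬ s.headA ↔ s.k = .fw ∨ s.k = .un := by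
  obtain ⟨a, b, k⟩ := s
  cases k <;> simp [Step.headA]

lemma Step.not_headB_iff {s : Step V} : ¬ s.headB ↔ s.k = .bw ∨ s.k = .un := by
  obtain ⟨a, b, k⟩ := s
  cases k <;> simp [Step.headB]

lemma Step.ok.ne {G : MixedGraph V} {s : Step V} (hs : s.ok G) : s.a ≠ s.b := by
  obtain ⟨a, b, k⟩ := s
  rintro (rfl : a = b)
  cases k
  exacts [G.dir_irrefl a hs, G.dir_irrefl a hs, G.bidir_irrefl a hs, G.undir_irrefl a hs]

def Step.map (q : V → I) (s : Step V) : Step I := ⟨q s.a, q s.b, s.k⟩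

namespace MixedGraph

variable {G : MixedGraph V} {q : V → I}

lemma Strongly.trans {a b c : V} (hab : G.Strongly a b) (hbc : G.Strongly b c) :
    G.Strongly a c :=
  ⟨hab.1.trans hbc.1, hbc.2.trans hab.2⟩

lemma Acyclic.not_strongly (hG : G.Acyclic) {a b : V} (hab : a ≠ b) : ¬ G.Strongly a b := by
  rintro ⟨hab', hba⟩
  rcases hab'.cases_head with rfl | ⟨c, hac, hcb⟩
  · exact hab rfl
  · exact hG a ((TransGen.head' hac hcb).trans_left hba)

lemma IsWalk.append {a b c : V} {L₁ L₂ : List (Step V)} (h₁ : G.IsWalk a b L₁)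
    (h₂ : G.IsWalk b c L₂) : G.IsWalk a c (L₁ ++ L₂) := by
  induction h₁ with
  | nil => exact h₂
  | cons s L hs _ ih => exact .cons s _ hs (ih h₂)

lemma IsWalk.head_a {a b : V} {L : List (Step V)} (hw : G.IsWalk a b L) :
    ∀ s ∈ L.head?, s.a = a := by
  cases hw <;> simp

lemma IsWalk.isChain_b_eq_a {a b : V} {L : List (Step V)} (hw : G.IsWalk a b L) :
    L.IsChain fun s t => s.b = t.a := by
  induction hw with
  | nil => exact .nil
  | cons s L _ hw ih => exact ih.cons fun t ht => (hw.head_a t ht).symm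

lemma Strongly.exists_fw_walk {a b : V} (h : G.Strongly a b) :
    ∃ L, G.IsWalk a b L ∧ ∀ u ∈ L, u.k = .fw ∧ G.Strongly a u.a ∧ G.Strongly a u.b := by
  obtain ⟨hab, hba⟩ := h
  induction hab using ReflTransGen.head_induction_on with
  | refl => exact ⟨[], .nil b, by simp⟩
  | @head a c hac hcb ih =>
    have hac' : G.Strongly a c := ⟨.single hac, hcb.trans hba⟩
    obtain ⟨L, hL, hLk⟩ := ih (hba.tail hac)
    refine ⟨⟨a, c, .fw⟩ :: L, .cons ⟨a, c, .fw⟩ L hac hL, ?_⟩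
    rintro u (_ | ⟨_, hu⟩)
    · exact ⟨rfl, ⟨.refl, .refl⟩, hac'⟩
    · obtain ⟨hk, hua, hub⟩ := hLk u hu
      exact ⟨hk, hac'.trans hua, hac'.trans hub⟩

lemma Strongly.exists_bw_walk {a b : V} (h : G.Strongly a b) :
    ∃ L, G.IsWalk a b L ∧ ∀ u ∈ L, u.k = .bw ∧ G.Strongly a u.a ∧ G.Strongly a u.b := by
  obtain ⟨hab, hba⟩ := h
  induction hba with
  | refl => exact ⟨[], .nil b, by simp⟩
  | @tail c a hbc hca ih =>
    have hac : G.Strongly a c := ⟨hab.trans hbc, .single hca⟩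
    obtain ⟨L, hL, hLk⟩ := ih (hab.head hca)
    refine ⟨⟨a, c, .bw⟩ :: L, .cons ⟨a, c, .bw⟩ L hca hL, ?_⟩
    rintro u (_ | ⟨_, hu⟩)
    · exact ⟨rfl, ⟨.refl, .refl⟩, hac⟩
    · obtain ⟨hk, hua, hub⟩ := hLk u hu
      exact ⟨hk, hac.trans hua, hac.trans hub⟩

/-- The junction of consecutive steps `s`, `t` of a walk is σ-open given `S`: neither clause (2)
nor clause (3) of σ-blocking applies at the node `s.b`. -/
def SigmaOpenAt (G : MixedGraph V) (S : Set V) (s t : Step V) : Prop :=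
  (s.headB ∧ t.headA → ∃ d, ReflTransGen G.dir s.b d ∧ d ∈ S) ∧
  (¬ (s.headB ∧ t.headA) → s.b ∈ S →
    ¬ (((s.k = .bw ∨ s.k = .un) ∧ ¬ G.Strongly s.b s.a) ∨
      ((t.k = .fw ∨ t.k = .un) ∧ ¬ G.Strongly t.a t.b)))

theorem IsWalk.sigmaBlockedWalk_iff {S : Set V} {a b : V} {L : List (Step V)}
    (hw : G.IsWalk a b L) :
    G.SigmaBlockedWalk S a b L ↔ a ∈ S ∨ b ∈ S ∨ ¬ L.IsChain (G.SigmaOpenAt S) := by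
  refine or_congr_right (or_congr_right ⟨?_, fun h => ?_⟩)
  · have rel {i : ℕ} {s t : Step V} (hs : L[i]? = some s) (ht : L[i + 1]? = some t)
        (hL : L.IsChain (G.SigmaOpenAt S)) : G.SigmaOpenAt S s t := by
      obtain ⟨hi, rfl⟩ := List.getElem?_eq_some_iff.1 ht
      obtain ⟨-, rfl⟩ := List.getElem?_eq_some_iff.1 hs
      exact List.isChain_iff_getElem.1 hL i hi
    rintro (⟨i, v, ⟨s, t, hs, ht, rfl, -, hB, hA⟩, hno⟩ |
      ⟨i, s, t, hs, ht, -, hnc, hS, hblk⟩) hL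
    · obtain ⟨d, hd, hdS⟩ := (rel hs ht hL).1 ⟨hB, hA⟩
      exact hno d hd hdS
    · exact (rel hs ht hL).2 hnc hS hblk
  · obtain ⟨i, hi, hopen⟩ := List.exists_not_getElem_of_not_isChain h
    have hjoin : L[i].b = L[i + 1].a := List.isChain_iff_getElem.1 hw.isChain_b_eq_a i hi
    rw [SigmaOpenAt, not_and_or] at hopen
    simp only [Classical.not_imp, not_not] at hopen
    rcases hopen with ⟨hc, hno⟩ | ⟨hnc, hS, hblk⟩
    · exact .inl ⟨i, _, ⟨L[i], L[i + 1], by simp, by simp, rfl, hjoin.symm, hc⟩,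
        fun d hd hdS => hno ⟨d, hd, hdS⟩⟩
    · exact .inr ⟨i, L[i], L[i + 1], by simp, by simp, hjoin, hnc, hS, hblk⟩

lemma SigmaOpenAt.of_not_mem {S : Set V} {s t : Step V} (hnc : ¬ (s.headB ∧ t.headA))
    (hs : s.b ∉ S) : G.SigmaOpenAt S s t :=
  ⟨fun h => absurd h hnc, fun _ h => absurd h hs⟩

lemma SigmaOpenAt.not_mem_of_acyclic (hG : G.Acyclic) {S : Set V} {s t : Step V}
    (hs : s.ok G) (ht : t.ok G) (h : G.SigmaOpenAt S s t) (hnc : ¬ (s.headB ∧ t.headA)) :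
    s.b ∉ S := by
  intro hS
  refine h.2 hnc hS ?_
  by_cases hB : s.headB
  · exact .inr ⟨Step.not_headA_iff.1 fun hA => hnc ⟨hB, hA⟩, hG.not_strongly ht.ne⟩
  · exact .inl ⟨Step.not_headB_iff.1 hB, hG.not_strongly hs.ne.symm⟩

theorem exists_sigmaOpen_connector {T : Set V} {s t : Step V} (hst : G.Strongly s.b t.a)
    (hcol : s.headB → t.headA → ∃ d, ReflTransGen G.dir s.b d ∧ d ∈ T)
    (hnc : ¬ (s.headB ∧ t.headA) → ∀ u, G.Strongly s.b u → u ∉ T) :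
    ∃ L, G.IsWalk s.b t.a L ∧ (s :: (L ++ [t])).IsChain (G.SigmaOpenAt T) := by
  by_cases hc : s.headB ∧ t.headA
  · -- a directed path into the collider `t.a`; it creates only non-colliders whose outgoing
    -- edges stay inside the strongly connected component
    obtain ⟨d, hd, hdT⟩ := hcol hc.1 hc.2
    obtain ⟨L, hL, hLk⟩ := hst.exists_fw_walk
    refine ⟨L, hL, List.isChain_cons_append_singleton fun u hu v hv =>
      ⟨fun _ => ⟨d, ?_, hdT⟩, fun _ _ => ?_⟩⟩
    · rcases List.mem_cons.1 hu with rfl | hu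
      exacts [hd, (hLk u hu).2.2.2.trans hd]
    · rintro (⟨hk, -⟩ | ⟨hk, hns⟩)
      · rcases List.mem_cons.1 hu with rfl | hu
        · exact Step.not_headB_iff.2 hk hc.1
        · rcases hk with hk | hk <;> simp [(hLk u hu).1] at hk
      · rcases List.mem_append.1 hv with hv | hv
        · exact hns ((hLk v hv).2.1.symm.trans (hLk v hv).2.2)
        · rw [List.mem_singleton.1 hv] at hk
          exact Step.not_headA_iff.2 hk hc.2
  · have hout := hnc hc
    have hmem {L : List (Step V)} (hLk : ∀ u ∈ L, G.Strongly s.b u.b) :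
        ∀ u ∈ s :: L, u.b ∉ T := by
      rintro u (_ | ⟨_, hu⟩)
      exacts [hout _ ⟨.refl, .refl⟩, hout _ (hLk u hu)]
    by_cases hA : t.headA
    · obtain ⟨L, hL, hLk⟩ := hst.exists_bw_walk
      have hB : ∀ u ∈ s :: L, ¬ u.headB := by
        rintro u (_ | ⟨_, hu⟩)
        · exact fun hB => hc ⟨hB, hA⟩
        · exact Step.not_headB_iff.2 (.inl (hLk u hu).1)
      exact ⟨L, hL, List.isChain_cons_append_singleton fun u hu v _ =>
        .of_not_mem (fun h => hB u hu h.1) (hmem (fun u hu => (hLk u hu).2.2) u hu)⟩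
    · obtain ⟨L, hL, hLk⟩ := hst.exists_fw_walk
      have hA' : ∀ v ∈ L ++ [t], ¬ v.headA := by
        intro v hv
        rcases List.mem_append.1 hv with hv | hv
        · exact Step.not_headA_iff.2 (.inl (hLk v hv).1)
        · rwa [List.mem_singleton.1 hv]
      exact ⟨L, hL, List.isChain_cons_append_singleton fun u hu v hv =>
        .of_not_mem (fun h => hA' v hv h.2) (hmem (fun u hu => (hLk u hu).2.2) u hu)⟩

lemma exists_map_eq_of_ok_coarse {e : Step I} (he : e.ok (G.coarse q)) :
    ∃ s : Step V, s.ok G ∧ s.map q = e := by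
  obtain ⟨A, B, k⟩ := e
  cases k with
  | fw => obtain ⟨-, y, z, rfl, rfl, h⟩ := he; exact ⟨⟨y, z, .fw⟩, h, rfl⟩
  | bw => obtain ⟨-, y, z, rfl, rfl, h⟩ := he; exact ⟨⟨z, y, .bw⟩, h, rfl⟩
  | bi => obtain ⟨-, y, z, rfl, rfl, h⟩ := he; exact ⟨⟨y, z, .bi⟩, h, rfl⟩
  | un => obtain ⟨-, y, z, rfl, rfl, h⟩ := he; exact ⟨⟨y, z, .un⟩, h, rfl⟩

/-- Condition (iii) of the criterion, with `bd_e(Y)` written `bdEnd G q e` and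
`bd_{e'}(Y)` written `bdStart G q e'`. -/
def BoundariesLinked (G : MixedGraph V) (q : V → I) : Prop :=
  ∀ e e' : Step I, Step.ok (G.coarse q) e → Step.ok (G.coarse q) e' →
    e.b = e'.a → ∀ y ∈ bdEnd G q e, ∃ y' ∈ bdStart G q e', G.Strongly y y'

namespace BoundariesLinked

lemma exists_step (h : G.BoundariesLinked q) {s : Step V} (hs : s.ok G)
    (hsm : (s.map q).ok (G.coarse q)) {e : Step I} (he : e.ok (G.coarse q))
    (hse : q s.b = e.a) : ∃ t : Step V, t.ok G ∧ t.map q = e ∧ G.Strongly s.b t.a := by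
  obtain ⟨y, ⟨hy, z, hz, hyz⟩, hsy⟩ := h (s.map q) e hsm he hse s.b ⟨rfl, s.a, rfl, hs⟩
  exact ⟨⟨y, z, e.k⟩, hyz, by simp [Step.map, hy, hz], hsy⟩

lemma exists_dir (h : G.BoundariesLinked q) {s : Step V} (hs : s.ok G)
    (hsm : (s.map q).ok (G.coarse q)) {c : I} (hc : (G.coarse q).dir (q s.b) c) :
    ∃ y z, G.Strongly s.b y ∧ G.dir y z ∧ q y = q s.b ∧ q z = c := by
  obtain ⟨⟨y, z, k⟩, hyz, hmap, hsy⟩ :=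
    h.exists_step hs hsm (e := ⟨q s.b, c, .fw⟩) hc rfl
  obtain ⟨hy, hz, rfl⟩ : q y = q s.b ∧ q z = c ∧ k = .fw := by simpa [Step.map] using hmap
  exact ⟨y, z, hsy, hyz, hy, hz⟩

lemma exists_reach (h : G.BoundariesLinked q) {s : Step V} (hs : s.ok G)
    (hsm : (s.map q).ok (G.coarse q)) {D : I}
    (hD : ReflTransGen (G.coarse q).dir (q s.b) D) :
    ∃ s' : Step V, s'.ok G ∧ (s'.map q).ok (G.coarse q) ∧ q s'.b = D ∧
      ReflTransGen G.dir s.b s'.b := by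
  generalize hW : q s.b = W at hD
  induction hD using ReflTransGen.head_induction_on generalizing s with
  | refl => exact ⟨s, hs, hsm, hW, .refl⟩
  | head hWc _ ih =>
    subst hW
    obtain ⟨y, z, hsy, hyz, hy, hz⟩ := h.exists_dir hs hsm hWc
    obtain ⟨s', hs', hs'c, hs'D, hzs'⟩ :=
      ih (s := ⟨y, z, .fw⟩) hyz (show (G.coarse q).dir (q y) (q z) by rwa [hy, hz]) hz
    exact ⟨s', hs', hs'c, hs'D, hsy.1.trans (.head hyz hzs')⟩

end BoundariesLinked

theorem coarse_acyclic [Finite V] (hscc : ∀ a b, G.Strongly a b → q a = q b)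
    (hbd : G.BoundariesLinked q) : (G.coarse q).Acyclic := by
  intro A hA
  obtain ⟨B, hAB, hBA⟩ := TransGen.tail'_iff.1 hA
  let P : Set V := {v | ∃ y, G.dir y v ∧ q y = B ∧ q v = A}
  let R (v w : V) : Prop := ∃ y, q y = B ∧ ReflTransGen G.dir v y ∧ G.dir y w ∧ q w = A
  have hsucc : ∀ v ∈ P, ∃ w ∈ P, R v w := by
    rintro v ⟨y, hyv, hy, hv⟩
    obtain ⟨s', hs', hs'c, hs'B, hvs'⟩ := hbd.exists_reach (s := ⟨y, v, .fw⟩) hyv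
      (show (G.coarse q).dir (q y) (q v) by rwa [hy, hv]) (hv ▸ hAB)
    obtain ⟨y', w, hs'y', hy'w, hy', hw⟩ := hbd.exists_dir hs' hs'c (hs'B ▸ hBA)
    exact ⟨w, ⟨y', hy'w, hy'.trans hs'B, hw⟩,
      y', hy'.trans hs'B, hvs'.trans hs'y'.1, hy'w, hw⟩
  obtain ⟨y, z, hy, hz, hyz⟩ := hBA.2
  obtain ⟨v, hv⟩ := Finite.exists_transGen_self (P := P) ⟨z, y, hyz, hy, hz⟩ hsucc
  obtain ⟨w, ⟨y', hy', hvy', hy'w, hw⟩, hwv⟩ := TransGen.head'_iff.1 hv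
  have hwv' : ReflTransGen G.dir w v :=
    hwv.lift' id fun _ _ ⟨_, _, h₁, h₂, _⟩ => h₁.tail h₂
  exact hBA.1 (hy' ▸ hw ▸ hscc y' w ⟨.single hy'w, hwv'.trans hvy'⟩)

theorem exists_sigmaOpen_lift_from (hscc : ∀ a b, G.Strongly a b → q a = q b)
    (hbd : G.BoundariesLinked q) (hac : (G.coarse q).Acyclic) {S : Set I} {Y Z : I}
    {Lc : List (Step I)} (hw : (G.coarse q).IsWalk Y Z Lc) (hZ : Z ∉ S) {s : Step V}
    (hs : s.ok G) (hsm : (s.map q).ok (G.coarse q)) (hY : q s.b = Y)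
    (hopen : (s.map q :: Lc).IsChain ((G.coarse q).SigmaOpenAt S)) :
    ∃ b L, q b = Z ∧ G.IsWalk s.b b L ∧ (s :: L).IsChain (G.SigmaOpenAt (q ⁻¹' S)) := by
  induction hw generalizing s with
  | nil => exact ⟨s.b, [], hY, .nil _, .singleton s⟩
  | cons E Lc hE _ ih =>
    obtain ⟨t, ht, rfl, hst⟩ := hbd.exists_step hs hsm hE hY
    obtain ⟨hjunction, hopen'⟩ := List.isChain_cons_cons.1 hopen
    obtain ⟨b, L, hb, hL, hLopen⟩ := ih hZ ht hE rfl hopen'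
    obtain ⟨C, hC, hCopen⟩ := exists_sigmaOpen_connector (T := q ⁻¹' S) hst
      (fun hB hA => by
        obtain ⟨D, hsD, hD⟩ := hjunction.1 ⟨hB, hA⟩
        obtain ⟨s', -, -, rfl, hss'⟩ := hbd.exists_reach hs hsm hsD
        exact ⟨s'.b, hss', hD⟩)
      (fun hnc u hu huS => hjunction.not_mem_of_acyclic hac hsm hE hnc
        (show q s.b ∈ S by rw [hscc _ _ hu]; exact huS))
    refine ⟨b, C ++ t :: L, hb, hC.append (.cons t L ht hL), ?_⟩
    simpa using
      hCopen.append_overlap (l₁ := s :: C) (l₂ := [t]) (by simpa using hLopen) (by simp)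

theorem exists_sigmaOpen_lift (hq : Function.Surjective q)
    (hscc : ∀ a b, G.Strongly a b → q a = q b) (hbd : G.BoundariesLinked q)
    (hac : (G.coarse q).Acyclic) {S : Set I} {Y Z : I} {Lc : List (Step I)}
    (hw : (G.coarse q).IsWalk Y Z Lc) (hopen : ¬ (G.coarse q).SigmaBlockedWalk S Y Z Lc) :
    ∃ a b L, q a = Y ∧ q b = Z ∧ G.IsWalk a b L ∧
      ¬ G.SigmaBlockedWalk (q ⁻¹' S) a b L := by
  simp only [hw.sigmaBlockedWalk_iff, not_or, not_not] at hopen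
  obtain ⟨hY, hZ, hLc⟩ := hopen
  cases hw with
  | nil =>
    obtain ⟨a, rfl⟩ := hq Y
    exact ⟨a, a, [], rfl, rfl, .nil a, by simpa [(IsWalk.nil a).sigmaBlockedWalk_iff] using hY⟩
  | cons E Lc hE hw =>
    obtain ⟨s, hs, rfl⟩ := exists_map_eq_of_ok_coarse hE
    obtain ⟨b, L, rfl, hL, hLopen⟩ :=
      exists_sigmaOpen_lift_from hscc hbd hac hw hZ hs hE rfl hLc
    have hsL := IsWalk.cons s L hs hL
    exact ⟨s.a, b, s :: L, rfl, rfl, hsL, by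
      simpa [hsL.sigmaBlockedWalk_iff, hLopen] using ⟨hY, hZ⟩⟩

end MixedGraph

lemma genOf_mono [MeasurableSpace Ω] (X : V → Ω → ℝ) {A B : Set V} (h : A ⊆ B) :
    genOf X A ≤ genOf X B :=
  biSup_mono h

lemma GroupCI.mono [MeasurableSpace Ω] [StandardBorelSpace Ω] {μ : Measure Ω}
    [IsFiniteMeasure μ] {X : V → Ω → ℝ} {A B A' B' W : Set V} (hA : A' ⊆ A)
    (hB : B' ⊆ B) (h : GroupCI μ X A B W) : GroupCI μ X A' B' W := by
  obtain ⟨hle, hind⟩ := h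
  exact ⟨hle, fun t₁ t₂ ht₁ ht₂ =>
    hind t₁ t₂ (genOf_mono X hA t₁ ht₁) (genOf_mono X hB t₂ ht₂)⟩

open MeasureTheory ProbabilityTheory MixedGraph in
theorem faithfulness_criterion_one_general {Ω V I : Type} [MeasurableSpace Ω]
    [StandardBorelSpace Ω] [Fintype V] (μ : Measure Ω) [IsProbabilityMeasure μ]
    (X : V → Ω → ℝ)
    (G : MixedGraph V)
    (q : V → I) (hq : Function.Surjective q)
    (h1 : SigmaMarkov G μ X ∧ SigmaFaithful G μ X)
    (h2 : ∀ a b, G.Strongly a b → q a = q b)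
    (h3 : ∀ e e' : Step I, Step.ok (G.coarse q) e → Step.ok (G.coarse q) e' →
      e.b = e'.a → ∀ y ∈ bdEnd G q e, ∃ y' ∈ bdStart G q e', G.Strongly y y') :
    SigmaFaithfulGrp G q μ X ∧ (G.coarse q).Acyclic := by
  have hac : (G.coarse q).Acyclic := coarse_acyclic h2 h3
  refine ⟨fun Y Z S hCI Lc hw => by_contra fun hopen => ?_, hac⟩
  obtain ⟨a, b, L, rfl, rfl, hL, hLopen⟩ := exists_sigmaOpen_lift hq h2 h3 hac hw hopen
  have hab : GroupCI μ X {a} {b} (q ⁻¹' S) := hCI.mono (by simp) (by simp)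
  exact hLopen (h1.2 a b _ hab L hL)

open MeasureTheory ProbabilityTheory MixedGraph in
/-- **Faithfulness criterion 1.** Assume (i) the micro-level pair
`(G, μ)` is σ-Markovian and σ-faithful, (ii) every strongly connected component of
`G` is contained in a single group of the partition `q`, and (iii) for every
adjacent pair of edges `e = (W,Y)`, `e' = (Y,Z)` of the coarse graph and every
`y ∈ bd_e(Y)` there exists `y' ∈ bd_{e'}(Y)` in the same strongly connected
component of `G` as `y`. Then the pair of the coarse graph and the distribution is
σ-faithful and the coarse graph is acyclic. -/
theorem faithfulness_criterion_one {Ω V I : Type} [MeasurableSpace Ω]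
    [StandardBorelSpace Ω] [Fintype V] (μ : Measure Ω) [IsProbabilityMeasure μ]
    (X : V → Ω → ℝ) (hX : ∀ v, Measurable (X v)) (hpos : HasPositiveDensity μ X)
    (G : MixedGraph V) (hDMG : G.IsDMG)
    (q : V → I) (hq : Function.Surjective q)
    (h1 : SigmaMarkov G μ X ∧ SigmaFaithful G μ X)
    (h2 : ∀ a b, G.Strongly a b → q a = q b)
    (h3 : ∀ e e' : Step I, Step.ok (G.coarse q) e → Step.ok (G.coarse q) e' →
      e.b = e'.a → ∀ y ∈ bdEnd G q e, ∃ y' ∈ bdStart G q e', G.Strongly y y') :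
    SigmaFaithfulGrp G q μ X ∧ (G.coarse q).Acyclic :=
  faithfulness_criterion_one_general μ X G q hq h1 h2 h3
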